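/- Let G be a compactly generated locally compact Hausdorff group. Then the following assertions are equivalent: (i) G is residually discrete; (ii) G is totally disconnected and is a SIN-group; (iii) the compact open normal subgroups of G form a basis of identity neighbourhoods. -/

import Mathlib

open scoped Pointwise Topology

/-- A topological group is *compactly generated* if it is generated, as a group,
by some compact subset. -/
def CompactlyGeneratedGroup (G : Type*) [Group G] [TopologicalSpace G] : Prop :=
  ∃ S : Set G, IsCompact S ∧ Subgroup.closure S = ⊤

/-- A topological group is *topologically simple* if it is non-trivial and its only
closed normal subgroups are the trivial subgroup and the whole group. -/
def IsTopologicallySimple (G : Type*) [Group G] [TopologicalSpace G] : Prop :=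
  Nontrivial G ∧ ∀ H : Subgroup G, H.Normal → IsClosed (H : Set G) → H = ⊥ ∨ H = ⊤

/-- Two topological groups are *topologically isomorphic* if there is a group
isomorphism between them which is also a homeomorphism. -/
def TopIsomorphic (G H : Type*) [Group G] [TopologicalSpace G] [Group H]
    [TopologicalSpace H] : Prop :=
  ∃ e : G ≃* H, Continuous e ∧ Continuous e.symm

/-- `G` is a quasi-product with quasi-factors `N 0, …, N (p-1)` if these are closed
normal subgroups of `G` such that the multiplication map `N 0 × ⋯ × N (p-1) → G`
is injective with dense image. -/
def IsQuasiProduct {G : Type*} [Group G] [TopologicalSpace G] {p : ℕ}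
    (N : Fin p → Subgroup G) : Prop :=
  (∀ i, (N i).Normal) ∧ (∀ i, IsClosed ((N i) : Set G)) ∧
  Function.Injective (fun x : (∀ i, ↥(N i)) => (List.ofFn fun i => (x i : G)).prod) ∧
  DenseRange (fun x : (∀ i, ↥(N i)) => (List.ofFn fun i => (x i : G)).prod)

/-!
Residual discreteness kills the identity component, so by van Dantzig there is a compact open
subgroup `K`. As the open normal subgroups meet trivially, compactness of `K` yields an open
normal `N` with `N ∩ K` inside any given identity neighbourhood; choosing that neighbourhood so
small that the compact generating set conjugates it into `K` makes the compact open subgroup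
`N ∩ K` normal. Conversely, in a totally disconnected SIN-group the normal core of a compact open
subgroup contains an invariant identity neighbourhood, hence is open.
-/

open Filter Set

theorem exists_isClopen_isCompact_subset {X : Type*} [TopologicalSpace X] [LocallyCompactSpace X]
    [T2Space X] [TotallyDisconnectedSpace X] {x : X} {U : Set X} (hU : U ∈ 𝓝 x) :
    ∃ V : Set X, IsClopen V ∧ IsCompact V ∧ x ∈ V ∧ V ⊆ U := by
  obtain ⟨K, hK, hKU, hKc⟩ := local_compact_nhds hU
  obtain ⟨V, hVc, hxV, hVK⟩ :=
    loc_compact_Haus_tot_disc_of_zero_dim.mem_nhds_iff.mp (interior_mem_nhds.mpr hK)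
  exact ⟨V, hVc, hKc.of_isClosed_subset hVc.isClosed (hVK.trans interior_subset), hxV,
    (hVK.trans interior_subset).trans hKU⟩

section

variable {G : Type*} [Group G]

theorem Subgroup.normal_of_forall_conj_mem {H : Subgroup G} {S : Set G}
    (hS : closure S = ⊤) (hS_inv : ∀ s ∈ S, s⁻¹ ∈ S)
    (hconj : ∀ s ∈ S, ∀ x ∈ H, s * x * s⁻¹ ∈ H) : H.Normal := by
  refine normalizer_eq_top_iff.mp (eq_top_iff.mpr ?_)
  rw [← hS, closure_le]
  intro s hs
  refine mem_normalizer_iff.mpr fun x => ⟨hconj s hs x, fun hx => ?_⟩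
  simpa [mul_assoc] using hconj s⁻¹ (hS_inv s hs) _ hx

variable [TopologicalSpace G]

variable (G) in
def IsResiduallyDiscrete : Prop :=
  sInf {N : Subgroup G | N.Normal ∧ IsOpen (N : Set G)} = ⊥

variable (G) in
def IsSINGroup : Prop :=
  ∀ U ∈ 𝓝 (1 : G), ∃ V ∈ 𝓝 (1 : G), V ⊆ U ∧ ∀ g : G, ∀ x ∈ V, g * x * g⁻¹ ∈ V

variable (G) in
def HasCompactOpenNormalNhdsBasis : Prop :=
  ∀ U ∈ 𝓝 (1 : G), ∃ V : Subgroup G, V.Normal ∧ IsCompact (V : Set G) ∧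
    IsOpen (V : Set G) ∧ (V : Set G) ⊆ U

theorem isResiduallyDiscrete_iff :
    IsResiduallyDiscrete G ↔
      ∀ x : G, (∀ N : Subgroup G, N.Normal → IsOpen (N : Set G) → x ∈ N) → x = 1 := by
  simp only [IsResiduallyDiscrete, eq_bot_iff, SetLike.le_def, Subgroup.mem_sInf,
    Subgroup.mem_bot, mem_ofPred_eq, and_imp]

theorem HasCompactOpenNormalNhdsBasis.isResiduallyDiscrete [T1Space G]
    (h : HasCompactOpenNormalNhdsBasis G) : IsResiduallyDiscrete G := by
  refine isResiduallyDiscrete_iff.mpr fun x hx => ?_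
  by_contra hx1
  obtain ⟨V, hVn, -, hVo, hVx⟩ := h {x}ᶜ (compl_singleton_mem_nhds (Ne.symm hx1))
  exact hVx (hx V hVn hVo) rfl

theorem HasCompactOpenNormalNhdsBasis.isSINGroup (h : HasCompactOpenNormalNhdsBasis G) :
    IsSINGroup G := by
  intro U hU
  obtain ⟨V, hVn, -, hVo, hVU⟩ := h U hU
  exact ⟨V, hVo.mem_nhds V.one_mem, hVU, fun g x hx => hVn.conj_mem x hx g⟩

section IsTopologicalGroup

variable [IsTopologicalGroup G]

theorem IsResiduallyDiscrete.totallyDisconnectedSpace (h : IsResiduallyDiscrete G) :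
    TotallyDisconnectedSpace G := by
  refine totallyDisconnectedSpace_iff_connectedComponent_one.mpr
    (eq_singleton_iff_unique_mem.mpr ⟨mem_connectedComponent, fun y hy => ?_⟩)
  refine isResiduallyDiscrete_iff.mp h y fun N _ hNo => ?_
  exact (IsClopen.connectedComponent_subset ⟨N.isClosed_of_isOpen hNo, hNo⟩ N.one_mem) hy

theorem IsResiduallyDiscrete.exists_normal_isOpen_inter_subset (h : IsResiduallyDiscrete G)
    {K U : Set G} (hK : IsCompact K) (hU : U ∈ 𝓝 (1 : G)) :
    ∃ N : Subgroup G, N.Normal ∧ IsOpen (N : Set G) ∧ (N : Set G) ∩ K ⊆ U := by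
  let ι := {N : Subgroup G // N.Normal ∧ IsOpen (N : Set G)}
  have : Nonempty ι := ⟨⟨⊤, inferInstance, isOpen_univ⟩⟩
  have hdir : Directed (· ⊇ ·) fun N : ι => (N.1 : Set G) := by
    rintro ⟨N₁, hN₁, hN₁o⟩ ⟨N₂, hN₂, hN₂o⟩
    exact ⟨⟨N₁ ⊓ N₂, Subgroup.normal_inf_normal N₁ N₂, hN₁o.inter hN₂o⟩,
      inter_subset_left, inter_subset_right⟩
  have hempty : (K \ interior U) ∩ ⋂ N : ι, (N.1 : Set G) = ∅ := by
    refine eq_empty_iff_forall_notMem.mpr fun x ⟨⟨_, hxU⟩, hxN⟩ => hxU ?_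
    have hx1 : x = 1 :=
      isResiduallyDiscrete_iff.mp h x fun N hN hNo => mem_iInter.mp hxN ⟨N, hN, hNo⟩
    exact hx1 ▸ mem_interior_iff_mem_nhds.mpr hU
  obtain ⟨⟨N, hN, hNo⟩, hNK⟩ := (hK.diff isOpen_interior).elim_directed_family_closed _
    (fun N => N.1.isClosed_of_isOpen N.2.2) hempty hdir
  exact ⟨N, hN, hNo, fun x ⟨hxN, hxK⟩ =>
    interior_subset (by_contra fun hxU => hNK.subset ⟨⟨hxK, hxU⟩, hxN⟩)⟩

theorem IsCompact.eventually_forall_conj_mem {S U : Set G} (hS : IsCompact S)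
    (hU : U ∈ 𝓝 (1 : G)) : ∀ᶠ x in 𝓝 (1 : G), ∀ s ∈ S, s * x * s⁻¹ ∈ U := by
  refine hS.eventually_forall_of_forall_eventually fun s _ => ?_
  have hconj : Tendsto (fun z : G × G => z.2 * z.1 * z.2⁻¹) (𝓝 (1, s)) (𝓝 1) := by
    simpa using (by fun_prop : Continuous fun z : G × G => z.2 * z.1 * z.2⁻¹).tendsto (1, s)
  exact hconj.eventually_mem hU

theorem isOpen_stabilizer_of_isCompact {K : Set G} (hK : IsCompact K) (hKo : IsOpen K) :
    IsOpen (MulAction.stabilizer G K : Set G) := by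
  obtain ⟨W, hW, hWK⟩ := compact_open_separated_mul_left hK hKo subset_rfl
  have hsmul : ∀ w ∈ W, w • K ⊆ K := fun w hw => (smul_set_subset_mul hw).trans hWK
  have hW_stab : W ∩ W⁻¹ ⊆ MulAction.stabilizer G K := fun w ⟨hw, hw_inv⟩ =>
    MulAction.mem_stabilizer_iff.mpr
      ((hsmul w hw).antisymm (subset_smul_set_iff.mpr (hsmul w⁻¹ hw_inv)))
  exact Subgroup.isOpen_of_mem_nhds _
    (mem_of_superset (inter_mem hW (inv_mem_nhds_one G hW)) hW_stab)

variable [LocallyCompactSpace G] [T2Space G]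

theorem exists_isCompact_isOpen_subgroup_subset [TotallyDisconnectedSpace G] {U : Set G}
    (hU : U ∈ 𝓝 (1 : G)) :
    ∃ H : Subgroup G, IsCompact (H : Set G) ∧ IsOpen (H : Set G) ∧ (H : Set G) ⊆ U := by
  obtain ⟨V, hVc, hVcpt, hV1, hVU⟩ := exists_isClopen_isCompact_subset hU
  let H := MulAction.stabilizer G V
  have hHo : IsOpen (H : Set G) := isOpen_stabilizer_of_isCompact hVcpt hVc.isOpen
  have hHV : (H : Set G) ⊆ V := fun g hg => by
    simpa using (MulAction.mem_stabilizer_iff.mp hg).subset (smul_mem_smul_set hV1)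
  exact ⟨H, hVcpt.of_isClosed_subset (H.isClosed_of_isOpen hHo) hHV, hHo, hHV.trans hVU⟩

theorem IsResiduallyDiscrete.hasCompactOpenNormalNhdsBasis (hcg : CompactlyGeneratedGroup G)
    (h : IsResiduallyDiscrete G) : HasCompactOpenNormalNhdsBasis G := by
  have := h.totallyDisconnectedSpace
  intro U hU
  obtain ⟨K, hKc, hKo, -⟩ := exists_isCompact_isOpen_subgroup_subset (G := G) univ_mem
  obtain ⟨S, hSc, hSgen⟩ := hcg
  have hconj : ∀ᶠ x in 𝓝 (1 : G), ∀ s ∈ S ∪ S⁻¹, s * x * s⁻¹ ∈ K :=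
    (hSc.union hSc.inv).eventually_forall_conj_mem (hKo.mem_nhds K.one_mem)
  obtain ⟨N, hN, hNo, hNK⟩ := h.exists_normal_isOpen_inter_subset hKc (inter_mem hU hconj)
  have hNKo : IsOpen ((N ⊓ K : Subgroup G) : Set G) := hNo.inter hKo
  refine ⟨N ⊓ K, ?_, hKc.of_isClosed_subset (Subgroup.isClosed_of_isOpen _ hNKo)
    inter_subset_right, hNKo, fun x hx => (hNK hx).1⟩
  refine Subgroup.normal_of_forall_conj_mem (S := S ∪ S⁻¹)
    (top_le_iff.mp (hSgen ▸ Subgroup.closure_mono subset_union_left)) ?_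
    fun s hs x hx => ⟨hN.conj_mem x hx.1 s, (hNK hx).2 s hs⟩
  rintro s (hs | hs)
  · exact Or.inr (by simpa using hs)
  · exact Or.inl hs

theorem IsSINGroup.hasCompactOpenNormalNhdsBasis [TotallyDisconnectedSpace G]
    (h : IsSINGroup G) : HasCompactOpenNormalNhdsBasis G := by
  intro U hU
  obtain ⟨K, hKc, hKo, hKU⟩ := exists_isCompact_isOpen_subgroup_subset hU
  obtain ⟨V, hV, hVK, hVconj⟩ := h K (hKo.mem_nhds K.one_mem)
  have hVcore : V ⊆ K.normalCore := fun x hx g => hVK (hVconj g x hx)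
  have hcore : IsOpen (K.normalCore : Set G) :=
    K.normalCore.isOpen_of_mem_nhds (mem_of_superset hV hVcore)
  exact ⟨K.normalCore, K.normalCore_normal,
    hKc.of_isClosed_subset (K.normalCore.isClosed_of_isOpen hcore) K.normalCore_le, hcore,
    (SetLike.coe_subset_coe.mpr K.normalCore_le).trans hKU⟩

end IsTopologicalGroup

end

/-- **Corollary (Caprace–Monod, residually discrete groups).** For a compactly
generated locally compact Hausdorff group `G`, the following are equivalent:
(i) `G` is residually discrete; (ii) `G` is a totally disconnected SIN-group;
(iii) the compact open normal subgroups of `G` form a basis of identity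
neighbourhoods. -/
theorem residually_discrete_tfae (G : Type*) [Group G] [TopologicalSpace G]
    [IsTopologicalGroup G] [LocallyCompactSpace G] [T2Space G]
    (hcg : CompactlyGeneratedGroup G) :
    (sInf {N : Subgroup G | N.Normal ∧ IsOpen (N : Set G)} = ⊥ ↔
      (TotallyDisconnectedSpace G ∧
        ∀ U ∈ nhds (1 : G), ∃ V ∈ nhds (1 : G), V ⊆ U ∧
          ∀ g : G, ∀ x ∈ V, g * x * g⁻¹ ∈ V)) ∧
    (sInf {N : Subgroup G | N.Normal ∧ IsOpen (N : Set G)} = ⊥ ↔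
      (∀ U ∈ nhds (1 : G), ∃ V : Subgroup G, V.Normal ∧ IsCompact (V : Set G) ∧
        IsOpen (V : Set G) ∧ (V : Set G) ⊆ U)) := by
  have hbasis : IsResiduallyDiscrete G → HasCompactOpenNormalNhdsBasis G :=
    IsResiduallyDiscrete.hasCompactOpenNormalNhdsBasis hcg
  refine ⟨⟨fun h => ⟨IsResiduallyDiscrete.totallyDisconnectedSpace h, (hbasis h).isSINGroup⟩, ?_⟩,
    ⟨hbasis, HasCompactOpenNormalNhdsBasis.isResiduallyDiscrete⟩⟩
  rintro ⟨_, hsin⟩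
  exact (IsSINGroup.hasCompactOpenNormalNhdsBasis hsin).isResiduallyDiscrete
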